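/- Fix positive constants V, λ, ℓ, B, N₀, Z, and channel gain H = |h|² > 0, and set A = V λ ℓ H (log 2)²/(N₀ B Z) > 0. Let w > 0 be the unique positive real with w e^w = √(A/4), and define P = (N₀/H)·((A/4)·w^{-2} − 1). Then P > 0, and x := 1 + H P/N₀ = (A/4)·w^{-2} satisfies x > 1 and x (log x)² = A; equivalently, P satisfies the transmit-power stationarity condition (1 + H P/N₀)·(log₂(1 + H P/N₀))² = V λ ℓ H/(N₀ B Z) of the per-device drift-plus-penalty objective. -/
import Mathlib


/-- Closed-form optimal transmit power: with A = VλℓH(log 2)²/(N₀BZ) > 0 and w > 0 the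
unique positive solution of w e^w = √(A/4), the power P = (N₀/H)((A/4)w⁻² − 1) is
positive, x := 1 + HP/N₀ = (A/4)w⁻² satisfies x > 1 and x(log x)² = A, and P satisfies
the stationarity condition (1 + HP/N₀)(log₂(1 + HP/N₀))² = VλℓH/(N₀BZ). -/
theorem optimal_power_closed_form
    (V lam l B N₀ Z H : ℝ)
    (hV : 0 < V) (hlam : 0 < lam) (hl : 0 < l) (hB : 0 < B)
    (hN₀ : 0 < N₀) (hZ : 0 < Z) (hH : 0 < H)
    (A : ℝ) (hA : A = V * lam * l * H * (Real.log 2) ^ 2 / (N₀ * B * Z))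
    (w : ℝ) (hw : 0 < w) (hwe : w * Real.exp w = Real.sqrt (A / 4))
    (P : ℝ) (hP : P = (N₀ / H) * ((A / 4) / w ^ 2 - 1)) :
    0 < P
      ∧ 1 + H * P / N₀ = (A / 4) / w ^ 2
      ∧ 1 < (A / 4) / w ^ 2
      ∧ ((A / 4) / w ^ 2) * (Real.log ((A / 4) / w ^ 2)) ^ 2 = A
      ∧ (1 + H * P / N₀) * (Real.logb 2 (1 + H * P / N₀)) ^ 2
          = V * lam * l * H / (N₀ * B * Z) := by
  have hlog2 : 0 < Real.log 2 := Real.log_pos (by norm_num)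
  have hApos : 0 < A := by
    rw [hA]; positivity
  have hA4 : A / 4 = (w * Real.exp w) ^ 2 := by
    rw [hwe, Real.sq_sqrt (by linarith)]
  have hwne : w ≠ 0 := ne_of_gt hw
  have hexp2 : Real.exp (2 * w) = Real.exp w ^ 2 := by
    rw [two_mul, Real.exp_add, sq]
  have hx : (A / 4) / w ^ 2 = Real.exp (2 * w) := by
    rw [hA4, mul_pow, hexp2]; field_simp
  have hx1 : 1 < (A / 4) / w ^ 2 := by
    rw [hx, show (1:ℝ) = Real.exp 0 from Real.exp_zero.symm]
    exact Real.exp_lt_exp.mpr (by linarith)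
  have hPpos : 0 < P := by
    rw [hP]; exact mul_pos (by positivity) (by linarith)
  have hxP : 1 + H * P / N₀ = (A / 4) / w ^ 2 := by
    rw [hP]; field_simp; ring
  have hmain : ((A / 4) / w ^ 2) * (Real.log ((A / 4) / w ^ 2)) ^ 2 = A := by
    rw [hx, Real.log_exp, hexp2]
    have hA' : A = 4 * (w * Real.exp w) ^ 2 := by linarith
    rw [hA']; ring
  refine ⟨hPpos, hxP, hx1, hmain, ?_⟩
  rw [hxP]
  unfold Real.logb
  rw [div_pow, ← mul_div_assoc, hmain, hA]
  field_simp
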